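/- (Braess paradox.) In the two-route Braess routing game with 4000 players (travel times 45 + n_i/100 on route i), every Nash equilibrium gives every player a travel time of 65. In the three-route game obtained by adding the zero-travel-time road 4 (travel times c_A = (n_A + n_C)/100 + 45, c_B = 45 + (n_B + n_C)/100, c_C = (n_A + n_C)/100 + (n_B + n_C)/100), the unique Nash equilibrium gives every player a travel time of 80. Hence adding the new road strictly increases every player's equilibrium travel time, from 65 to 80. -/
import Mathlib


/-- Number of players choosing route `r` in profile `s`. -/
def twoCount (s : Fin 4000 → Fin 2) (r : Fin 2) : ℕ :=
  (Finset.univ.filter fun i => s i = r).card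

/-- Travel time of player `i`: `45 + n_i / 100` where `n_i` is the number of
players choosing the same route as `i`. -/
noncomputable def twoCost (s : Fin 4000 → Fin 2) (i : Fin 4000) : ℝ :=
  45 + (twoCount s (s i) : ℝ) / 100

/-- Nash equilibrium: no player can strictly decrease his/her travel time by
unilaterally changing route. -/
def IsNashTwo (s : Fin 4000 → Fin 2) : Prop :=
  ∀ i : Fin 4000, ∀ r : Fin 2, twoCost s i ≤ twoCost (Function.update s i r) i

/-- Number of players choosing route `r` in profile `s`.
Routes: `0` = route A (roads 3,6), `1` = route B (roads 2,5), `2` = route C (roads 3,4,5). -/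
def threeCount (s : Fin 4000 → Fin 3) (r : Fin 3) : ℕ :=
  (Finset.univ.filter fun i => s i = r).card

/-- Travel time of route `r` under profile `s`:
`c_A = (n_A + n_C)/100 + 45`, `c_B = 45 + (n_B + n_C)/100`,
`c_C = (n_A + n_C)/100 + (n_B + n_C)/100`. -/
noncomputable def threeRouteCost (s : Fin 4000 → Fin 3) (r : Fin 3) : ℝ :=
  if r = 0 then ((threeCount s 0 : ℝ) + (threeCount s 2 : ℝ)) / 100 + 45
  else if r = 1 then 45 + ((threeCount s 1 : ℝ) + (threeCount s 2 : ℝ)) / 100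
  else ((threeCount s 0 : ℝ) + (threeCount s 2 : ℝ)) / 100
       + ((threeCount s 1 : ℝ) + (threeCount s 2 : ℝ)) / 100

/-- Travel time of player `i` under profile `s`. -/
noncomputable def threeCost (s : Fin 4000 → Fin 3) (i : Fin 4000) : ℝ :=
  threeRouteCost s (s i)

/-- Nash equilibrium: no player can strictly decrease his/her travel time by
unilaterally changing route. -/
def IsNashThree (s : Fin 4000 → Fin 3) : Prop :=
  ∀ i : Fin 4000, ∀ r : Fin 3, threeCost s i ≤ threeCost (Function.update s i r) i

lemma count_update {m : ℕ} (t : Fin 4000 → Fin m) (i : Fin 4000) (r' r : Fin m) :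
    ((Finset.univ.filter fun j => Function.update t i r' j = r).card
      + (if t i = r then 1 else 0))
    = (Finset.univ.filter fun j => t j = r).card + (if r' = r then 1 else 0) := by
  classical
  have split : ∀ u : Fin 4000 → Fin m,
      (Finset.univ.filter fun j => u j = r).card
        = ((Finset.univ.erase i).filter fun j => u j = r).card
          + (if u i = r then 1 else 0) := by
    intro u
    rw [Finset.card_filter, Finset.card_filter,
      ← Finset.add_sum_erase _ _ (Finset.mem_univ i), add_comm]
  have he : ((Finset.univ.erase i).filter fun j => Function.update t i r' j = r)
      = ((Finset.univ.erase i).filter fun j => t j = r) := by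
    apply Finset.filter_congr
    intro j hj
    simp [Function.update_of_ne (Finset.ne_of_mem_erase hj)]
  rw [split t, split (Function.update t i r'), he, Function.update_self]
  ring

lemma two_sum (s : Fin 4000 → Fin 2) : twoCount s 0 + twoCount s 1 = 4000 := by
  classical
  have h := Finset.card_eq_sum_card_fiberwise
    (s := (Finset.univ : Finset (Fin 4000))) (t := (Finset.univ : Finset (Fin 2)))
    (f := s) (fun x _ => Finset.mem_univ (s x))
  rw [Fin.sum_univ_two, Finset.card_univ, Fintype.card_fin] at h
  unfold twoCount
  omega

lemma two_eq (s : Fin 4000 → Fin 2) (h : IsNashTwo s) :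
    twoCount s 0 = 2000 ∧ twoCount s 1 = 2000 := by
  classical
  have key : ∀ i : Fin 4000, ∀ r' : Fin 2, s i ≠ r' →
      twoCount s (s i) ≤ twoCount s r' + 1 := by
    intro i r' hne
    have hN := h i r'
    have hcu := count_update s i r' r'
    rw [if_neg hne, if_pos rfl] at hcu
    unfold twoCost at hN
    rw [Function.update_self] at hN
    have hcu' : twoCount (Function.update s i r') r' = twoCount s r' + 1 := by
      unfold twoCount; omega
    rw [hcu'] at hN
    have : (twoCount s (s i) : ℝ) ≤ (twoCount s r' : ℝ) + 1 := by
      push_cast at hN ⊢; linarith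
    exact_mod_cast this
  have hsum := two_sum s
  have wit : ∀ r : Fin 2, 1 ≤ twoCount s r → ∃ j, s j = r := by
    intro r hr
    unfold twoCount at hr
    obtain ⟨j, hj⟩ := Finset.card_pos.mp hr
    exact ⟨j, (Finset.mem_filter.mp hj).2⟩
  have h2 : ∀ x : Fin 2, x = 0 ∨ x = 1 := by decide
  rcases h2 (s (0 : Fin 4000)) with h0 | h0
  · have k1 : twoCount s 0 ≤ twoCount s 1 + 1 := by
      have := key 0 1 (by rw [h0]; decide); rwa [h0] at this
    obtain ⟨j, hj⟩ := wit 1 (by omega)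
    have k2 : twoCount s 1 ≤ twoCount s 0 + 1 := by
      have := key j 0 (by rw [hj]; decide); rwa [hj] at this
    omega
  · have k1 : twoCount s 1 ≤ twoCount s 0 + 1 := by
      have := key 0 0 (by rw [h0]; decide); rwa [h0] at this
    obtain ⟨j, hj⟩ := wit 0 (by omega)
    have k2 : twoCount s 0 ≤ twoCount s 1 + 1 := by
      have := key j 1 (by rw [hj]; decide); rwa [hj] at this
    omega

lemma two_cost (s : Fin 4000 → Fin 2) (h : IsNashTwo s) (i : Fin 4000) :
    twoCost s i = 65 := by
  obtain ⟨h0, h1⟩ := two_eq s h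
  have h2 : ∀ x : Fin 2, x = 0 ∨ x = 1 := by decide
  unfold twoCost
  rcases h2 (s i) with hs | hs <;> rw [hs] <;> simp [h0, h1] <;> norm_num

lemma three_count_update (s : Fin 4000 → Fin 3) (i : Fin 4000) (r' r : Fin 3) :
    threeCount (Function.update s i r') r + (if s i = r then 1 else 0)
      = threeCount s r + (if r' = r then 1 else 0) := by
  unfold threeCount; exact count_update s i r' r

lemma three_sum (s : Fin 4000 → Fin 3) :
    threeCount s 0 + threeCount s 1 + threeCount s 2 = 4000 := by
  classical
  have h := Finset.card_eq_sum_card_fiberwise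
    (s := (Finset.univ : Finset (Fin 4000))) (t := (Finset.univ : Finset (Fin 3)))
    (f := s) (fun x _ => Finset.mem_univ (s x))
  rw [Fin.sum_univ_three, Finset.card_univ, Fintype.card_fin] at h
  unfold threeCount
  omega

lemma three_wit (s : Fin 4000 → Fin 3) (i : Fin 4000) : 1 ≤ threeCount s (s i) := by
  unfold threeCount
  exact Finset.card_pos.mpr ⟨i, Finset.mem_filter.mpr ⟨Finset.mem_univ i, rfl⟩⟩

section
variable (s : Fin 4000 → Fin 3)

lemma e20 : (2:Fin 3) ≠ 0 := by decide
lemma e21 : (2:Fin 3) ≠ 1 := by decide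
lemma e02 : (0:Fin 3) ≠ 2 := by decide
lemma e12 : (1:Fin 3) ≠ 2 := by decide
lemma e01 : (0:Fin 3) ≠ 1 := by decide
lemma e10 : (1:Fin 3) ≠ 0 := by decide

lemma three_counts_all (hall : ∀ i, s i = 2) :
    threeCount s 0 = 0 ∧ threeCount s 1 = 0 ∧ threeCount s 2 = 4000 := by
  refine ⟨?_, ?_, ?_⟩
  · unfold threeCount
    rw [Finset.card_eq_zero, Finset.filter_eq_empty_iff]
    intro j _; rw [hall j]; exact e20
  · unfold threeCount
    rw [Finset.card_eq_zero, Finset.filter_eq_empty_iff]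
    intro j _; rw [hall j]; exact e21
  · unfold threeCount
    have huniv : (Finset.univ.filter fun j => s j = 2) = Finset.univ := by
      ext j
      simp only [Finset.mem_filter, Finset.mem_univ, true_and, iff_true]
      exact hall j
    rw [huniv, Finset.card_univ, Fintype.card_fin]

lemma three_cost_all (hall : ∀ i, s i = 2) (i : Fin 4000) : threeCost s i = 80 := by
  obtain ⟨n0, n1, n2⟩ := three_counts_all s hall
  unfold threeCost
  rw [hall i]
  unfold threeRouteCost
  rw [if_neg e20, if_neg e21, n0, n1, n2]
  norm_num

lemma three_nash_iff : IsNashThree s ↔ ∀ i : Fin 4000, s i = 2 := by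
  constructor
  · intro hN i
    have h3 : ∀ x : Fin 3, x = 0 ∨ x = 1 ∨ x = 2 := by decide
    have hsum := three_sum s
    have hsumR : (threeCount s 0 : ℝ) + (threeCount s 1 : ℝ) + (threeCount s 2 : ℝ)
        = 4000 := by exact_mod_cast hsum
    rcases h3 (s i) with hs | hs | hs
    · exfalso
      have hpos := three_wit s i; rw [hs] at hpos
      have hposR : (1 : ℝ) ≤ (threeCount s 0 : ℝ) := by exact_mod_cast hpos
      have hI := hN i 2
      have c0 := three_count_update s i 2 0
      have c1 := three_count_update s i 2 1
      have c2 := three_count_update s i 2 2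
      rw [hs, if_pos rfl, if_neg e20] at c0
      rw [hs, if_neg e01, if_neg e21] at c1
      rw [hs, if_neg e02, if_pos rfl] at c2
      have C0 : (threeCount (Function.update s i 2) 0 : ℝ) + 1 = (threeCount s 0 : ℝ) := by
        have h' : threeCount (Function.update s i 2) 0 + 1 = threeCount s 0 := by omega
        exact_mod_cast h'
      have C1 : (threeCount (Function.update s i 2) 1 : ℝ) = (threeCount s 1 : ℝ) := by
        have h' : threeCount (Function.update s i 2) 1 = threeCount s 1 := by omega
        exact_mod_cast h'
      have C2 : (threeCount (Function.update s i 2) 2 : ℝ) = (threeCount s 2 : ℝ) + 1 := by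
        have h' : threeCount (Function.update s i 2) 2 = threeCount s 2 + 1 := by omega
        exact_mod_cast h'
      unfold threeCost at hI
      rw [hs, Function.update_self] at hI
      unfold threeRouteCost at hI
      rw [if_pos rfl, if_neg e20, if_neg e21] at hI
      linarith
    · exfalso
      have hpos := three_wit s i; rw [hs] at hpos
      have hposR : (1 : ℝ) ≤ (threeCount s 1 : ℝ) := by exact_mod_cast hpos
      have hI := hN i 2
      have c0 := three_count_update s i 2 0
      have c1 := three_count_update s i 2 1
      have c2 := three_count_update s i 2 2
      rw [hs, if_neg e10, if_neg e20] at c0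
      rw [hs, if_pos rfl, if_neg e21] at c1
      rw [hs, if_neg e12, if_pos rfl] at c2
      have C0 : (threeCount (Function.update s i 2) 0 : ℝ) = (threeCount s 0 : ℝ) := by
        have h' : threeCount (Function.update s i 2) 0 = threeCount s 0 := by omega
        exact_mod_cast h'
      have C1 : (threeCount (Function.update s i 2) 1 : ℝ) + 1 = (threeCount s 1 : ℝ) := by
        have h' : threeCount (Function.update s i 2) 1 + 1 = threeCount s 1 := by omega
        exact_mod_cast h'
      have C2 : (threeCount (Function.update s i 2) 2 : ℝ) = (threeCount s 2 : ℝ) + 1 := by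
        have h' : threeCount (Function.update s i 2) 2 = threeCount s 2 + 1 := by omega
        exact_mod_cast h'
      unfold threeCost at hI
      rw [hs, Function.update_self] at hI
      unfold threeRouteCost at hI
      rw [if_neg e10, if_pos rfl, if_neg e20, if_neg e21] at hI
      linarith
    · exact hs
  · intro hall i r'
    obtain ⟨n0, n1, n2⟩ := three_counts_all s hall
    rw [three_cost_all s hall i]
    have h3 : ∀ x : Fin 3, x = 0 ∨ x = 1 ∨ x = 2 := by decide
    unfold threeCost
    rw [Function.update_self]
    have c0 := three_count_update s i r' 0
    have c1 := three_count_update s i r' 1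
    have c2 := three_count_update s i r' 2
    rw [hall i, if_neg e20, n0] at c0
    rw [hall i, if_neg e21, n1] at c1
    rw [hall i, if_pos rfl, n2] at c2
    rcases h3 r' with hr | hr | hr <;> subst hr
    · rw [if_neg e02] at c2
      rw [if_pos rfl] at c0
      have C0 : (threeCount (Function.update s i 0) 0 : ℝ) = 1 := by
        have h' : threeCount (Function.update s i 0) 0 = 1 := by omega
        exact_mod_cast h'
      have C2 : (threeCount (Function.update s i 0) 2 : ℝ) = 3999 := by
        have : threeCount (Function.update s i 0) 2 = 3999 := by omega
        exact_mod_cast this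
      unfold threeRouteCost
      rw [if_pos rfl, C0, C2]
      norm_num
    · rw [if_neg e12] at c2
      rw [if_pos rfl] at c1
      have C1 : (threeCount (Function.update s i 1) 1 : ℝ) = 1 := by
        have h' : threeCount (Function.update s i 1) 1 = 1 := by omega
        exact_mod_cast h'
      have C2 : (threeCount (Function.update s i 1) 2 : ℝ) = 3999 := by
        have : threeCount (Function.update s i 1) 2 = 3999 := by omega
        exact_mod_cast this
      unfold threeRouteCost
      rw [if_neg e10, if_pos rfl, C1, C2]
      norm_num
    · rw [if_pos rfl] at c2
      rw [if_neg e20] at c0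
      rw [if_neg e21] at c1
      have C0 : (threeCount (Function.update s i 2) 0 : ℝ) = 0 := by
        have : threeCount (Function.update s i 2) 0 = 0 := by omega
        exact_mod_cast this
      have C1 : (threeCount (Function.update s i 2) 1 : ℝ) = 0 := by
        have : threeCount (Function.update s i 2) 1 = 0 := by omega
        exact_mod_cast this
      have C2 : (threeCount (Function.update s i 2) 2 : ℝ) = 4000 := by
        have : threeCount (Function.update s i 2) 2 = 4000 := by omega
        exact_mod_cast this
      unfold threeRouteCost
      rw [if_neg e20, if_neg e21, C0, C1, C2]
      norm_num

end

lemma three_cost (s : Fin 4000 → Fin 3) (h : IsNashThree s) (i : Fin 4000) :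
    threeCost s i = 80 :=
  three_cost_all s ((three_nash_iff s).mp h) i

/-- Braess paradox: in the two-route game every Nash equilibrium gives every
player travel time 65; in the three-route game (with the added zero-cost road)
the unique Nash equilibrium is "everyone on route C", where every player's
travel time is 80 > 65. -/
theorem stmt10 :
    (∀ s : Fin 4000 → Fin 2, IsNashTwo s → ∀ i : Fin 4000, twoCost s i = 65) ∧
    (∀ s : Fin 4000 → Fin 3, (IsNashThree s ↔ ∀ i : Fin 4000, s i = 2)) ∧
    (∀ s : Fin 4000 → Fin 3, IsNashThree s → ∀ i : Fin 4000, threeCost s i = 80) ∧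
    (65 : ℝ) < 80 := by
  exact ⟨two_cost, three_nash_iff, three_cost, by norm_num⟩
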